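/- For n ≤ m and 0 < ρ < n, the minimum cardinality of a code with rank covering radius ρ satisfies ⌊q^{mn}/V_ρ(q^m,n)⌋ + 1 ≤ K_R(q^m,n,ρ) ≤ q^{m(n−ρ)}; in particular K_R(q^m,n,ρ) is strictly greater than q^{mn}/V_ρ(q^m,n). -/

import Mathlib

open scoped BigOperators

noncomputable section

/-- The rank weight of a vector over the extension field `Fqm`, with respect to the base
field `Fq`: the dimension over `Fq` of the `Fq`-span of the coordinates. -/
def rankWeight (Fq : Type) {Fqm : Type} [Field Fq] [Field Fqm] [Algebra Fq Fqm]
    {n : ℕ} (x : Fin n → Fqm) : ℕ :=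
  Module.finrank Fq (Submodule.span Fq (Set.range x))

/-- An elementary linear subspace: a subspace generated by vectors all of whose
coordinates lie in the base field `Fq`. -/
def IsELS (Fq : Type) {Fqm : Type} [Field Fq] [Field Fqm] [Algebra Fq Fqm]
    {n : ℕ} (V : Submodule Fqm (Fin n → Fqm)) : Prop :=
  ∃ S : Set (Fin n → Fqm),
    (∀ s ∈ S, ∀ i, s i ∈ Set.range (algebraMap Fq Fqm)) ∧
    V = Submodule.span Fqm S

/-- The ball of rank radius `r` centered at `c`. -/
def rankBall (Fq : Type) {Fqm : Type} [Field Fq] [Field Fqm] [Algebra Fq Fqm]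
    {n : ℕ} (r : ℕ) (c : Fin n → Fqm) : Set (Fin n → Fqm) :=
  {y | rankWeight Fq (y - c) ≤ r}

/-- `V_r(q^m, n)`: the volume of a ball of rank radius `r`. -/
def ballVol (Fq Fqm : Type) [Field Fq] [Field Fqm] [Algebra Fq Fqm]
    (n r : ℕ) : ℕ :=
  Nat.card ↥(rankBall Fq r (0 : Fin n → Fqm))

/-- `K_R(q^m, n, ρ)`: minimum cardinality of a nonempty code of length `n` with rank
covering radius at most `ρ`. -/
def coveringNumber (Fq Fqm : Type) [Field Fq] [Field Fqm] [Algebra Fq Fqm]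
    (n ρ : ℕ) : ℕ :=
  sInf {k : ℕ | ∃ C : Finset (Fin n → Fqm), C.Nonempty ∧
    (∀ x : Fin n → Fqm, ∃ c ∈ C, rankWeight Fq (x - c) ≤ ρ) ∧ C.card = k}

/-- `σ(q) = (1/ln q) Σ_{k≥1} 1/(k(q^k - 1))`. -/
def sigmaQ (q : ℕ) : ℝ :=
  (1 / Real.log q) * ∑' k : ℕ, 1 / (((k : ℝ) + 1) * ((q : ℝ) ^ (k + 1) - 1))

/-- `α(e, u) = ∏_{i=0}^{u-1} (q^e - q^i)` (with integer exponent `e`). -/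
def alphaQ (q : ℕ) (e : ℤ) (u : ℕ) : ℚ :=
  ∏ i ∈ Finset.range u, ((q : ℚ) ^ e - (q : ℚ) ^ i)

/-- The Gaussian binomial `[n u]_q = α(n,u)/α(u,u)`. -/
def gaussQ (q n u : ℕ) : ℚ := alphaQ q n u / alphaQ q u u


section Helpers

variable {Fq Fqm : Type} [Field Fq] [Fintype Fq] [Field Fqm] [Fintype Fqm] [Algebra Fq Fqm]
variable {n : ℕ}

instance : FiniteDimensional Fq Fqm := Module.finite_iff_finite.mpr inferInstance

lemma rw_le_card (x : Fin n → Fqm) (T : Finset Fqm)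
    (h : ∀ i, x i ∈ Submodule.span Fq (T : Set Fqm)) : rankWeight Fq x ≤ T.card := by
  have h1 : Submodule.span Fq (Set.range x) ≤ Submodule.span Fq (T : Set Fqm) :=
    Submodule.span_le.mpr (by rintro _ ⟨i, rfl⟩; exact h i)
  refine le_trans (Submodule.finrank_mono h1) ?_
  exact finrank_span_finset_le_card T

lemma rankWeight_zero : rankWeight Fq (0 : Fin n → Fqm) = 0 :=
  Nat.le_zero.mp (rw_le_card 0 ∅ (by simp))

lemma rankWeight_le (x : Fin n → Fqm) : rankWeight Fq x ≤ n := by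
  classical
  refine le_trans (rw_le_card x (Finset.image x Finset.univ)
    (fun i => Submodule.subset_span (by simp))) ?_
  refine le_trans Finset.card_image_le ?_
  rw [Finset.card_univ, Fintype.card_fin]

lemma rankWeight_eq_zero {x : Fin n → Fqm} (h : rankWeight Fq x = 0) : x = 0 := by
  rw [rankWeight, Submodule.finrank_eq_zero] at h
  funext i
  have : x i ∈ Submodule.span Fq (Set.range x) := Submodule.subset_span ⟨i, rfl⟩
  rw [h] at this
  simpa using this

lemma rankWeight_neg (x : Fin n → Fqm) : rankWeight Fq (-x) = rankWeight Fq x := by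
  have key : ∀ y : Fin n → Fqm,
      Submodule.span Fq (Set.range (-y)) ≤ Submodule.span Fq (Set.range y) := by
    intro y
    refine Submodule.span_le.mpr ?_
    rintro _ ⟨i, rfl⟩
    exact neg_mem (Submodule.subset_span ⟨i, rfl⟩)
  have h2 := key (-x)
  rw [neg_neg] at h2
  exact le_antisymm (Submodule.finrank_mono (key x)) (Submodule.finrank_mono h2)

lemma rankWeight_le_of_isZero (y : Fin n → Fqm) (r s : ℕ) (hn : n ≤ r + s)
    (hy : ∀ i : Fin n, (i : ℕ) < r → y i = 0) : rankWeight Fq y ≤ s := by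
  classical
  set g : Fin s → Fqm := fun k => if h : r + (k : ℕ) < n then y ⟨r + k, h⟩ else 0 with hg
  set T : Finset Fqm := Finset.image g Finset.univ with hT
  have hTcard : T.card ≤ s := by
    refine le_trans (Finset.card_image_le) ?_
    rw [Finset.card_univ, Fintype.card_fin]
  refine le_trans (rw_le_card y T ?_) hTcard
  intro i
  by_cases hi : (i : ℕ) < r
  · rw [hy i hi]; exact zero_mem _
  · apply Submodule.subset_span
    have hk : (i : ℕ) - r < s := by omega
    let k : Fin s := ⟨(i : ℕ) - r, hk⟩
    have hlt : r + ((k : Fin s) : ℕ) < n := by simp [k]; omega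
    have hvi : (⟨r + (k : ℕ), hlt⟩ : Fin n) = i := Fin.ext (by simp [k]; omega)
    have hgk : g k = y i := by
      rw [hg]
      simp only []
      rw [dif_pos hlt, hvi]
    exact Finset.mem_coe.mpr (Finset.mem_image.mpr ⟨k, Finset.mem_univ _, hgk⟩)

lemma rankWeight_split {s : ℕ} (x : Fin n → Fqm) (hs : s ≤ rankWeight Fq x) :
    ∃ a b : Fin n → Fqm, x = a + b ∧ rankWeight Fq a ≤ s ∧
      rankWeight Fq b ≤ rankWeight Fq x - s := by
  classical
  set W := Submodule.span Fq (Set.range x) with hW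
  set d := Module.finrank Fq W with hd
  have hdx : rankWeight Fq x = d := rfl
  let B := Module.finBasis Fq W
  have hxi : ∀ i, x i ∈ W := fun i => Submodule.subset_span ⟨i, rfl⟩
  let c : Fin n → Fin d → Fq := fun i k => B.repr ⟨x i, hxi i⟩ k
  have hxsum : ∀ i, x i = ∑ k : Fin d, c i k • (B k : Fqm) := by
    intro i
    have := congrArg (Subtype.val) (B.sum_repr ⟨x i, hxi i⟩)
    simp only [Submodule.coe_sum, Submodule.coe_smul] at this
    exact this.symm
  refine ⟨fun i => ∑ k ∈ Finset.univ.filter (fun k : Fin d => (k : ℕ) < s), c i k • (B k : Fqm),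
    fun i => ∑ k ∈ Finset.univ.filter (fun k : Fin d => ¬ (k : ℕ) < s), c i k • (B k : Fqm),
    ?_, ?_, ?_⟩
  · funext i
    rw [Pi.add_apply, Finset.sum_filter_add_sum_filter_not, ← hxsum i]
  · refine le_trans (rw_le_card _ ((Finset.univ.filter (fun k : Fin d => (k : ℕ) < s)).image
      (fun k => (B k : Fqm))) ?_) ?_
    · intro i
      refine Submodule.sum_mem _ (fun k hk => Submodule.smul_mem _ _ (Submodule.subset_span ?_))
      exact Finset.mem_coe.mpr (Finset.mem_image_of_mem _ hk)
    · refine le_trans Finset.card_image_le ?_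
      calc (Finset.univ.filter (fun k : Fin d => (k : ℕ) < s)).card
          ≤ (Finset.range s).card := by
            refine Finset.card_le_card_of_injOn (fun k => (k : ℕ)) ?_ ?_
            · intro k hk; simp at hk ⊢; omega
            · intro k _ k' _ h; exact Fin.ext h
        _ = s := Finset.card_range s
  · refine le_trans (rw_le_card _ ((Finset.univ.filter (fun k : Fin d => ¬ (k : ℕ) < s)).image
      (fun k => (B k : Fqm))) ?_) ?_
    · intro i
      refine Submodule.sum_mem _ (fun k hk => Submodule.smul_mem _ _ (Submodule.subset_span ?_))
      exact Finset.mem_coe.mpr (Finset.mem_image_of_mem _ hk)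
    · refine le_trans Finset.card_image_le ?_
      rw [hdx]
      calc (Finset.univ.filter (fun k : Fin d => ¬ (k : ℕ) < s)).card
          ≤ (Finset.range (d - s)).card := by
            refine Finset.card_le_card_of_injOn (fun k => (k : ℕ) - s) ?_ ?_
            · intro k hk; simp at hk ⊢; omega
            · intro k hk k' hk' h
              simp only [Finset.coe_filter, Set.mem_setOf_eq, Finset.mem_univ,
                true_and, not_lt] at hk hk'
              simp only [] at h
              exact Fin.ext (by omega)
        _ = d - s := Finset.card_range _

lemma exists_full_rank (hnm : n ≤ Module.finrank Fq Fqm) :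
    ∃ v : Fin n → Fqm, rankWeight Fq v = n := by
  let b := Module.finBasis Fq Fqm
  refine ⟨fun i => b (Fin.castLE hnm i), ?_⟩
  have hli : LinearIndependent Fq (fun i : Fin n => b (Fin.castLE hnm i)) :=
    b.linearIndependent.comp _ (Fin.castLE_injective hnm)
  rw [rankWeight, finrank_span_eq_card hli, Fintype.card_fin]

lemma sum_fin_dite {M : Type} [AddCommMonoid M] {d r : ℕ} (hd : d ≤ r) (F : ℕ → M)
    (hF : ∀ j, d ≤ j → F j = 0) :
    ∑ j : Fin r, F (j : ℕ) = ∑ k : Fin d, F (k : ℕ) := by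
  rw [Fin.sum_univ_eq_sum_range, Fin.sum_univ_eq_sum_range]
  exact (Finset.sum_subset (Finset.range_subset_range.mpr hd)
    (fun j _ hj => hF j (by simpa using hj))).symm

lemma exists_rep {ρ : ℕ} (hρ : 0 < ρ) (x : Fin n → Fqm) (hx : rankWeight Fq x ≤ ρ)
    (hx0 : x ≠ 0) :
    ∃ p : (Fin n → Fin ρ → Fq) × {a : Fin ρ → Fqm // a ≠ 0},
      ∀ i, x i = ∑ j, p.1 i j • (p.2.1 j) := by
  classical
  set W := Submodule.span Fq (Set.range x) with hW
  set d := Module.finrank Fq W with hd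
  have hdρ : d ≤ ρ := hx
  have hd0 : 0 < d := by
    rcases Nat.eq_zero_or_pos d with h | h
    · exact absurd (rankWeight_eq_zero (x := x) h) hx0
    · exact h
  let B := Module.finBasis Fq W
  have hxi : ∀ i, x i ∈ W := fun i => Submodule.subset_span ⟨i, rfl⟩
  let a : Fin ρ → Fqm := fun j => if h : (j : ℕ) < d then (B ⟨j, h⟩ : Fqm) else 0
  let M : Fin n → Fin ρ → Fq := fun i j =>
    if h : (j : ℕ) < d then B.repr ⟨x i, hxi i⟩ ⟨j, h⟩ else 0
  have ha0 : a ≠ 0 := by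
    intro h0
    have := congrFun h0 ⟨0, hρ⟩
    rw [Pi.zero_apply] at this
    simp only [a, hd0, dif_pos] at this
    exact B.ne_zero ⟨0, hd0⟩ (by exact_mod_cast Subtype.ext this)
  refine ⟨(M, ⟨a, ha0⟩), fun i => ?_⟩
  have hxsum : x i = ∑ k : Fin d, (B.repr ⟨x i, hxi i⟩ k) • (B k : Fqm) := by
    have := congrArg (Subtype.val) (B.sum_repr ⟨x i, hxi i⟩)
    simp only [Submodule.coe_sum, Submodule.coe_smul] at this
    exact this.symm
  let F : ℕ → Fqm := fun j => if h : j < d then (B.repr ⟨x i, hxi i⟩ ⟨j, h⟩) • (B ⟨j, h⟩ : Fqm)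
    else 0
  have hMa : ∀ j : Fin ρ, M i j • a j = F (j : ℕ) := by
    intro j
    by_cases h : (j : ℕ) < d
    · simp only [M, a, F, dif_pos h]
    · simp only [M, a, F, dif_neg h, zero_smul]
  have hFk : ∀ k : Fin d, F (k : ℕ) = (B.repr ⟨x i, hxi i⟩ k) • (B k : Fqm) := by
    intro k
    simp only [F, dif_pos k.isLt, Fin.eta]
  calc x i = ∑ k : Fin d, (B.repr ⟨x i, hxi i⟩ k) • (B k : Fqm) := hxsum
    _ = ∑ k : Fin d, F (k : ℕ) := by
        exact Finset.sum_congr rfl (fun k _ => (hFk k).symm)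
    _ = ∑ j : Fin ρ, F (j : ℕ) := (sum_fin_dite hdρ F (fun j hj => dif_neg (by omega))).symm
    _ = ∑ j : Fin ρ, M i j • a j := Finset.sum_congr rfl (fun j _ => (hMa j).symm)

lemma ballVol_pos {ρ : ℕ} : 0 < ballVol Fq Fqm n ρ := by
  have h0 : (0 : Fin n → Fqm) ∈ rankBall Fq ρ (0 : Fin n → Fqm) := by
    show rankWeight Fq (0 - 0 : Fin n → Fqm) ≤ ρ
    rw [sub_zero, rankWeight_zero]
    exact Nat.zero_le _
  haveI : Nonempty ↥(rankBall Fq ρ (0 : Fin n → Fqm)) := ⟨⟨0, h0⟩⟩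
  exact Nat.card_pos

lemma ballVol_le {ρ : ℕ} (hρ : 0 < ρ) :
    ballVol Fq Fqm n ρ ≤
      (Fintype.card Fq) ^ (n * ρ) * ((Fintype.card Fqm) ^ ρ - 1) + 1 := by
  classical
  have hrep : ∀ x : ↥(rankBall Fq ρ (0 : Fin n → Fqm)), x.1 ≠ 0 →
      ∃ p : (Fin n → Fin ρ → Fq) × {a : Fin ρ → Fqm // a ≠ 0},
        ∀ i, x.1 i = ∑ j, p.1 i j • (p.2.1 j) := by
    intro x hx
    refine exists_rep hρ x.1 ?_ hx
    have := x.2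
    simpa [rankBall, sub_zero] using this
  choose F hF using hrep
  set f : ↥(rankBall Fq ρ (0 : Fin n → Fqm)) →
      ((Fin n → Fin ρ → Fq) × {a : Fin ρ → Fqm // a ≠ 0}) ⊕ Unit :=
    fun x => if h : x.1 = 0 then Sum.inr () else Sum.inl (F x h) with hf
  have hinj : Function.Injective f := by
    intro x y hxy
    by_cases hx : x.1 = 0 <;> by_cases hy : y.1 = 0
    · exact Subtype.ext (hx.trans hy.symm)
    · simp only [hf, dif_pos hx, dif_neg hy] at hxy; exact absurd hxy.symm (Sum.inl_ne_inr)
    · simp only [hf, dif_neg hx, dif_pos hy] at hxy; exact absurd hxy (Sum.inl_ne_inr)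
    · simp only [hf, dif_neg hx, dif_neg hy, Sum.inl.injEq] at hxy
      refine Subtype.ext (funext fun i => ?_)
      rw [hF x hx i, hF y hy i, hxy]
  have hle := Nat.card_le_card_of_injective f hinj
  rw [ballVol]
  refine le_trans hle ?_
  rw [Nat.card_sum, Nat.card_prod]
  have h1 : Nat.card (Fin n → Fin ρ → Fq) = (Fintype.card Fq) ^ (n * ρ) := by
    rw [Nat.card_eq_fintype_card, Fintype.card_fun, Fintype.card_fun, Fintype.card_fin,
      Fintype.card_fin, ← pow_mul, mul_comm ρ n]
  have h2 : Nat.card {a : Fin ρ → Fqm // a ≠ 0} = (Fintype.card Fqm) ^ ρ - 1 := by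
    rw [Nat.card_eq_fintype_card]
    have := Fintype.card_subtype_compl (fun a : Fin ρ → Fqm => a = 0)
    simp only [ne_eq]
    rw [this, Fintype.card_subtype_eq, Fintype.card_fun, Fintype.card_fin]
  rw [h1, h2, Nat.card_unique]

lemma arith_contra {A B V : ℕ} (hA2 : 2 ≤ A) (hAB : A ≤ B) (h3 : B * B ≤ V)
    (h4 : V ≤ A * (B - 1) + 1) : False := by
  obtain ⟨b, rfl⟩ : ∃ b, B = b + 1 := ⟨B - 1, by omega⟩
  rw [Nat.add_sub_cancel] at h4
  have h5 : (b + 1) * (b + 1) ≤ A * b + 1 := le_trans h3 h4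
  have h6 : A * b ≤ (b + 1) * b := Nat.mul_le_mul_right b hAB
  nlinarith

lemma covering_lb {ρ : ℕ} (hρ1 : 0 < ρ) (hρ2 : ρ < n) (hnm : n ≤ Module.finrank Fq Fqm)
    (C : Finset (Fin n → Fqm))
    (hcov : ∀ x : Fin n → Fqm, ∃ c ∈ C, rankWeight Fq (x - c) ≤ ρ) :
    Nat.card (Fin n → Fqm) < C.card * ballVol Fq Fqm n ρ := by
  classical
  choose cf hcf1 hcf2 using hcov
  have hmem : ∀ x : Fin n → Fqm, x - cf x ∈ rankBall Fq ρ (0 : Fin n → Fqm) := by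
    intro x
    show rankWeight Fq (x - cf x - 0) ≤ ρ
    rw [sub_zero]
    exact hcf2 x
  set f : (Fin n → Fqm) → ({y // y ∈ C} × ↥(rankBall Fq ρ (0 : Fin n → Fqm))) :=
    fun x => (⟨cf x, hcf1 x⟩, ⟨x - cf x, hmem x⟩) with hfdef
  have hinj : Function.Injective f := by
    intro x y h
    have h1 : cf x = cf y := congrArg (fun p => (p.1 : Fin n → Fqm)) h
    have h2 : x - cf x = y - cf y := congrArg (fun p => (p.2 : Fin n → Fqm)) h
    have := congrArg (· + cf x) h2
    simpa [h1, sub_add_cancel] using this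
  have hle : Nat.card (Fin n → Fqm) ≤ C.card * ballVol Fq Fqm n ρ := by
    refine le_trans (Nat.card_le_card_of_injective f hinj) ?_
    rw [Nat.card_prod, Nat.card_eq_finsetCard, ballVol]
  rcases lt_or_eq_of_le hle with h | heq
  · exact h
  exfalso
  have hcards : Fintype.card (Fin n → Fqm) =
      Fintype.card ({y // y ∈ C} × ↥(rankBall Fq ρ (0 : Fin n → Fqm))) := by
    rw [← Nat.card_eq_fintype_card, ← Nat.card_eq_fintype_card, heq,
      Nat.card_prod, Nat.card_eq_finsetCard, ballVol]
  have hbij : Function.Bijective f :=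
    (Fintype.bijective_iff_injective_and_card f).mpr ⟨hinj, hcards⟩
  -- disjointness of balls
  have hdisj : ∀ c1 ∈ C, ∀ c2 ∈ C, ∀ z : Fin n → Fqm,
      rankWeight Fq (z - c1) ≤ ρ → rankWeight Fq (z - c2) ≤ ρ → c1 = c2 := by
    have key : ∀ c ∈ C, ∀ z : Fin n → Fqm, rankWeight Fq (z - c) ≤ ρ → cf z = c := by
      intro c hc z hz
      have hzc : z - c ∈ rankBall Fq ρ (0 : Fin n → Fqm) := by
        show rankWeight Fq (z - c - 0) ≤ ρ
        rw [sub_zero]; exact hz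
      obtain ⟨y, hy⟩ := hbij.2 (⟨c, hc⟩, ⟨z - c, hzc⟩)
      have h1 : cf y = c := congrArg (fun p => (p.1 : Fin n → Fqm)) hy
      have h2 : y - cf y = z - c := congrArg (fun p => (p.2 : Fin n → Fqm)) hy
      have hyz : y = z := by
        have := congrArg (· + c) h2
        simpa [h1, sub_add_cancel] using this
      rw [← hyz, h1]
    intro c1 h1 c2 h2 z hz1 hz2
    rw [← key c1 h1 z hz1, key c2 h2 z hz2]
  -- distinct codewords are far apart
  have hfar : ∀ c1 ∈ C, ∀ c2 ∈ C, c1 ≠ c2 → ¬ rankWeight Fq (c1 - c2) ≤ 2 * ρ := by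
    intro c1 h1 c2 h2 hne hle2
    by_cases hcase : rankWeight Fq (c1 - c2) ≤ ρ
    · refine hne (hdisj c1 h1 c2 h2 c1 ?_ hcase)
      rw [sub_self, rankWeight_zero]; exact Nat.zero_le _
    · obtain ⟨a, b, hab, ha, hb⟩ := rankWeight_split (c1 - c2) (le_of_not_ge hcase)
      refine hne (hdisj c1 h1 c2 h2 (c2 + b) ?_ ?_)
      · have heq2 : c2 + b - c1 = -a := by
          have h3 : c1 = a + b + c2 := by
            rw [← hab]; abel
          rw [h3]; abel
        rw [heq2, rankWeight_neg]
        exact ha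
      · have heq3 : c2 + b - c2 = b := by abel
        rw [heq3]
        omega
  by_cases h2ρ : n ≤ 2 * ρ
  · -- C is a singleton, but there is a full-rank vector
    set c0 := cf 0 with hc0
    have hsing : ∀ c ∈ C, c = c0 := by
      intro c hc
      by_contra hne
      exact hfar c hc c0 (hcf1 0) hne (le_trans (rankWeight_le _) h2ρ)
    obtain ⟨v, hv⟩ := exists_full_rank hnm
    have hc := hsing (cf (c0 + v)) (hcf1 (c0 + v))
    have := hcf2 (c0 + v)
    rw [hc] at this
    have heq4 : c0 + v - c0 = v := by abel
    rw [heq4, hv] at this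
    omega
  · -- Singleton bound + ball volume bound
    push_neg at h2ρ
    set r := n - 2 * ρ with hr
    set P : (Fin n → Fqm) → (Fin r → Fqm) :=
      fun c => fun k => c (Fin.castLE (by omega) k) with hP
    have hinjP : Set.InjOn P ↑C := by
      intro c1 hc1 c2 hc2 hPeq
      by_contra hne
      refine hfar c1 hc1 c2 hc2 hne ?_
      refine rankWeight_le_of_isZero (c1 - c2) r (2 * ρ) (by omega) ?_
      intro i hi
      have := congrFun hPeq ⟨(i : ℕ), hi⟩
      simp only [hP] at this
      have hci : (Fin.castLE (by omega : r ≤ n) ⟨(i : ℕ), hi⟩) = i := Fin.ext rfl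
      rw [hci] at this
      rw [Pi.sub_apply, this, sub_self]
    have hCcard : C.card ≤ (Fintype.card Fqm) ^ r := by
      calc C.card = (C.image P).card := (Finset.card_image_of_injOn hinjP).symm
        _ ≤ Fintype.card (Fin r → Fqm) := by
            refine le_trans (Finset.card_le_card (Finset.subset_univ _)) ?_
            rw [Finset.card_univ]
        _ = (Fintype.card Fqm) ^ r := by rw [Fintype.card_fun, Fintype.card_fin]
    set Q := Fintype.card Fqm with hQdef
    set V := ballVol Fq Fqm n ρ with hV
    have hQcard : Nat.card (Fin n → Fqm) = Q ^ n := by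
      rw [Nat.card_eq_fintype_card, Fintype.card_fun, Fintype.card_fin]
    have h1 : Q ^ n ≤ Q ^ r * V := by
      rw [← hQcard, heq]
      exact Nat.mul_le_mul_right _ hCcard
    have hQ2 : 2 ≤ Q := Fintype.one_lt_card
    have hrn : r + 2 * ρ = n := by omega
    have h2 : Q ^ r * Q ^ (2 * ρ) = Q ^ n := by
      rw [← pow_add, hrn]
    have h3 : Q ^ (2 * ρ) ≤ V := by
      refine Nat.le_of_mul_le_mul_left ?_ (pow_pos (show 0 < Q by omega) r)
      rw [h2]; exact h1
    -- upper bound on V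
    set q := Fintype.card Fq with hqdef
    have hq2 : 2 ≤ q := Fintype.one_lt_card
    have hQq : Q = q ^ (Module.finrank Fq Fqm) := Module.card_eq_pow_finrank
    have h4 : V ≤ q ^ (n * ρ) * (Q ^ ρ - 1) + 1 := ballVol_le hρ1
    -- now derive contradiction
    have hAB : q ^ (n * ρ) ≤ Q ^ ρ := by
      rw [hQq, ← pow_mul]
      exact Nat.pow_le_pow_right (by omega) (Nat.mul_le_mul_right ρ hnm)
    have hA2 : 2 ≤ q ^ (n * ρ) :=
      le_trans hq2 (Nat.le_self_pow (Nat.mul_pos (by omega) hρ1).ne' q)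
    have hBB : Q ^ ρ * Q ^ ρ = Q ^ (2 * ρ) := by
      rw [← pow_add]
      congr 1
      omega
    exact arith_contra hA2 hAB (by rw [hBB]; exact h3) h4


lemma exists_code {ρ : ℕ} (hρn : ρ ≤ n) :
    ∃ C : Finset (Fin n → Fqm), C.Nonempty ∧
      (∀ x : Fin n → Fqm, ∃ c ∈ C, rankWeight Fq (x - c) ≤ ρ) ∧
      C.card = (Fintype.card Fqm) ^ (n - ρ) := by
  classical
  set r := n - ρ with hr
  set E : (Fin r → Fqm) → (Fin n → Fqm) :=
    fun g i => if h : (i : ℕ) < r then g ⟨i, h⟩ else 0 with hE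
  have hrn : r ≤ n := by omega
  have hEval : ∀ (g : Fin r → Fqm) (k : Fin r), E g (Fin.castLE hrn k) = g k := by
    intro g k
    simp only [hE]
    rw [dif_pos (show ((Fin.castLE hrn k : Fin n) : ℕ) < r from k.isLt)]
    exact congrArg g (Fin.ext rfl)
  have hEinj : Function.Injective E := by
    intro g1 g2 h
    funext k
    rw [← hEval g1 k, ← hEval g2 k, h]
  refine ⟨Finset.image E Finset.univ, ⟨E 0, Finset.mem_image_of_mem _ (Finset.mem_univ 0)⟩,
    ?_, ?_⟩
  · intro x
    set c := E (fun k => x (Fin.castLE hrn k)) with hc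
    refine ⟨c, ?_, ?_⟩
    · rw [hc]; exact Finset.mem_image_of_mem _ (Finset.mem_univ _)
    refine rankWeight_le_of_isZero (x - c) r ρ (by omega) ?_
    intro i hi
    have hci : c i = x i := by
      simp only [hc, hE]
      rw [dif_pos hi]
      congr 1
    rw [Pi.sub_apply, hci, sub_self]
  · rw [Finset.card_image_of_injective _ hEinj, Finset.card_univ, Fintype.card_fun,
      Fintype.card_fin]

end Helpers

/-- The sphere covering bound and the trivial upper bound on `K_R(q^m,n,ρ)`:
`⌊q^{mn}/V_ρ⌋ + 1 ≤ K_R(q^m,n,ρ) ≤ q^{m(n-ρ)}`; in particular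
`K_R(q^m,n,ρ) > q^{mn}/V_ρ`. -/
theorem stmt9 (q m n ρ : ℕ) (Fq Fqm : Type) [Field Fq] [Fintype Fq] [Field Fqm] [Fintype Fqm]
    [Algebra Fq Fqm] (hq : Fintype.card Fq = q) (hm : Module.finrank Fq Fqm = m)
    (hnm : n ≤ m) (hρ1 : 0 < ρ) (hρ2 : ρ < n) :
    q ^ (m * n) / ballVol Fq Fqm n ρ + 1 ≤ coveringNumber Fq Fqm n ρ ∧
    coveringNumber Fq Fqm n ρ ≤ q ^ (m * (n - ρ)) ∧
    (q : ℚ) ^ (m * n) / (ballVol Fq Fqm n ρ : ℚ) < (coveringNumber Fq Fqm n ρ : ℚ) := by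
  classical
  have hm' : n ≤ Module.finrank Fq Fqm := by rw [hm]; exact hnm
  obtain ⟨Cup, hCne, hCcov, hCcard⟩ := exists_code (Fq := Fq) (Fqm := Fqm) (le_of_lt hρ2)
  have hcardQ : Fintype.card Fqm = q ^ m := by
    rw [Module.card_eq_pow_finrank (K := Fq) (V := Fqm), hq, hm]
  have hCup : Cup.card = q ^ (m * (n - ρ)) := by rw [hCcard, hcardQ, ← pow_mul]
  have hmemUp : Cup.card ∈ {k : ℕ | ∃ C : Finset (Fin n → Fqm), C.Nonempty ∧
      (∀ x : Fin n → Fqm, ∃ c ∈ C, rankWeight Fq (x - c) ≤ ρ) ∧ C.card = k} :=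
    ⟨Cup, hCne, hCcov, rfl⟩
  have hKmem : coveringNumber Fq Fqm n ρ ∈ {k : ℕ | ∃ C : Finset (Fin n → Fqm), C.Nonempty ∧
      (∀ x : Fin n → Fqm, ∃ c ∈ C, rankWeight Fq (x - c) ≤ ρ) ∧ C.card = k} :=
    Nat.sInf_mem ⟨Cup.card, hmemUp⟩
  obtain ⟨C, hCne2, hCcov2, hCcard2⟩ := hKmem
  have hlt : q ^ (m * n) < coveringNumber Fq Fqm n ρ * ballVol Fq Fqm n ρ := by
    have h := covering_lb hρ1 hρ2 hm' C hCcov2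
    rw [hCcard2] at h
    have hcard2 : Nat.card (Fin n → Fqm) = q ^ (m * n) := by
      rw [Nat.card_eq_fintype_card, Fintype.card_fun, Fintype.card_fin, hcardQ, ← pow_mul]
    rwa [hcard2] at h
  have hV : 0 < ballVol Fq Fqm n ρ := ballVol_pos (Fq := Fq) (Fqm := Fqm)
  refine ⟨?_, ?_, ?_⟩
  · have := (Nat.div_lt_iff_lt_mul hV).mpr hlt
    omega
  · exact le_trans (Nat.sInf_le hmemUp) (le_of_eq hCup)
  · rw [div_lt_iff₀ (by exact_mod_cast hV)]
    exact_mod_cast hlt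

end
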